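/- Let R = ℂ[x₀,…,x₅]/(x₀²,…,x₅²), graded by total degree, let S¹ ⊂ R denote the image of the space of homogeneous linear forms, and let ζ ≠ ζ′ be complex numbers with ζ³ = ζ′³ = −1. Then the degree-2 graded component of R is spanned by the products ℓ·m, where ℓ ranges over images of linear forms and m ranges over the six elements x₀ − ζx₁, x₂ − ζx₃, x₄ − ζx₅, x₀ − ζ′x₁, x₂ − ζ′x₃, x₄ − ζ′x₅; that is, S¹·⟨x₀ − ζx₁, x₂ − ζx₃, x₄ − ζx₅⟩ + S¹·⟨x₀ − ζ′x₁, x₂ − ζ′x₃, x₄ − ζ′x₅⟩ equals the full degree-2 part of R. -/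

import Mathlib

open MvPolynomial

noncomputable section

/-- The Jacobian ideal of the Fermat cubic fourfold `x₀³ + ⋯ + x₅³`,
generated by the squares of the six variables. -/
def fermatJacIdeal : Ideal (MvPolynomial (Fin 6) ℂ) :=
  Ideal.span (Set.range fun i : Fin 6 => (X i : MvPolynomial (Fin 6) ℂ) ^ 2)

/-- The Jacobian ring `R = ℂ[x₀,…,x₅]/(x₀²,…,x₅²)` of the Fermat cubic fourfold. -/
abbrev FermatJacRing := MvPolynomial (Fin 6) ℂ ⧸ fermatJacIdeal

/-- The quotient map `ℂ[x₀,…,x₅] → R`. -/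
def fermatπ : MvPolynomial (Fin 6) ℂ →ₐ[ℂ] FermatJacRing :=
  Ideal.Quotient.mkₐ ℂ fermatJacIdeal

/-- The degree-`d` graded component of `R`: the image of the space of
homogeneous polynomials of degree `d` under the quotient map. -/
def fermatDeg (d : ℕ) : Submodule ℂ FermatJacRing :=
  (homogeneousSubmodule (Fin 6) ℂ d).map fermatπ.toLinearMap

/-! Every quadratic monomial of `R` is `xₐ·x_j` or `x_b·x_j` for a pair `(a, b)` among
`(0, 1), (2, 3), (4, 5)`, and `x_j·(xₐ - ζ x_b) = xₐx_j - ζ x_bx_j`. The products with the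
`ζ`-form and with the `ζ'`-form are two combinations of `xₐx_j` and `x_bx_j` whose
coefficient matrix has determinant `ζ - ζ'`, so for `ζ ≠ ζ'` both monomials lie in the span. -/

theorem Finsupp.exists_eq_single_add_single_of_degree_eq_two {σ : Type*} {s : σ →₀ ℕ}
    (h : s.degree = 2) : ∃ i j, s = single i 1 + single j 1 := by
  classical
  obtain ⟨i, j, hij⟩ := Multiset.card_eq_two.mp (s.card_toMultiset.trans h)
  refine ⟨i, j, ?_⟩
  rw [← s.toMultiset_toFinsupp, hij, Multiset.insert_eq_cons, ← Multiset.singleton_add,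
    Multiset.toFinsupp_add, Multiset.toFinsupp_singleton, Multiset.toFinsupp_singleton]

theorem MvPolynomial.IsHomogeneous.mem_span_X_mul_X {σ R : Type*} [CommSemiring R]
    {p : MvPolynomial σ R} (hp : p.IsHomogeneous 2) :
    p ∈ Submodule.span R (Set.range fun ij : σ × σ => X ij.1 * X ij.2) := by
  rw [p.as_sum]
  refine Submodule.sum_mem _ fun s hs => ?_
  obtain ⟨i, j, rfl⟩ := Finsupp.exists_eq_single_add_single_of_degree_eq_two
    (by rw [Finsupp.degree_eq_weight_one]; exact hp (mem_support_iff.1 hs))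
  have hX (c : R) : monomial (Finsupp.single i 1 + Finsupp.single j 1) c = c • (X i * X j) := by
    rw [X, X, monomial_mul, one_mul, smul_monomial, smul_eq_mul, mul_one]
  rw [hX]
  exact Submodule.smul_mem _ _ (Submodule.subset_span ⟨(i, j), rfl⟩)

theorem Submodule.mem_and_mem_of_sub_smul_mem {K M : Type*} [Field K] [AddCommGroup M]
    [Module K M] {N : Submodule K M} {u v : M} {a b : K} (hab : a ≠ b)
    (ha : u - a • v ∈ N) (hb : u - b • v ∈ N) : u ∈ N ∧ v ∈ N := by
  have hv : v = (b - a)⁻¹ • ((u - a • v) - (u - b • v)) := by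
    rw [sub_sub_sub_cancel_left, ← sub_smul, smul_smul,
      inv_mul_cancel₀ (sub_ne_zero.2 hab.symm), one_smul]
  have hv' : v ∈ N := hv ▸ N.smul_mem _ (N.sub_mem ha hb)
  exact ⟨by simpa using N.add_mem ha (N.smul_mem a hv'), hv'⟩

def fermatPlaneSpan (ζ : ℂ) : Submodule ℂ FermatJacRing :=
  Submodule.span ℂ {x : FermatJacRing | ∃ ℓ ∈ fermatDeg 1,
    ∃ m ∈ ({fermatπ (X 0 - C ζ * X 1), fermatπ (X 2 - C ζ * X 3),
      fermatπ (X 4 - C ζ * X 5)} : Set FermatJacRing), x = ℓ * m}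

theorem fermatπ_mem_fermatDeg {d : ℕ} {p : MvPolynomial (Fin 6) ℂ} (hp : p.IsHomogeneous d) :
    fermatπ p ∈ fermatDeg d :=
  ⟨p, hp, rfl⟩

theorem mul_mem_fermatDeg {d e : ℕ} {ℓ m : FermatJacRing} (hℓ : ℓ ∈ fermatDeg d)
    (hm : m ∈ fermatDeg e) : ℓ * m ∈ fermatDeg (d + e) := by
  obtain ⟨p, hp, rfl⟩ := hℓ
  obtain ⟨q, hq, rfl⟩ := hm
  exact ⟨p * q, IsHomogeneous.mul hp hq, map_mul fermatπ p q⟩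

theorem fermatDeg_two_le {M : Submodule ℂ FermatJacRing}
    (hM : ∀ i j : Fin 6, fermatπ (X i * X j) ∈ M) : fermatDeg 2 ≤ M := by
  rintro _ ⟨p, hp, rfl⟩
  have hspan := Submodule.mem_map_of_mem (f := fermatπ.toLinearMap) hp.mem_span_X_mul_X
  rw [Submodule.map_span] at hspan
  refine Submodule.span_le.2 ?_ hspan
  rintro _ ⟨_, ⟨⟨i, j⟩, rfl⟩, rfl⟩
  exact hM i j

theorem fermatPlaneSpan_le_fermatDeg_two (ζ : ℂ) : fermatPlaneSpan ζ ≤ fermatDeg 2 := by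
  have hlin (a b : Fin 6) : fermatπ (X a - C ζ * X b) ∈ fermatDeg 1 :=
    fermatπ_mem_fermatDeg
      ((isHomogeneous_X ℂ a).sub ((isHomogeneous_C _ ζ).mul (isHomogeneous_X ℂ b)))
  rw [fermatPlaneSpan, Submodule.span_le]
  rintro _ ⟨ℓ, hℓ, m, hm, rfl⟩
  rcases hm with rfl | rfl | rfl <;> exact mul_mem_fermatDeg hℓ (hlin _ _)

theorem X_mul_sub_smul_X_mul_mem_fermatPlaneSpan (ζ : ℂ) (j : Fin 6) {a b : Fin 6}
    (hab : a = 0 ∧ b = 1 ∨ a = 2 ∧ b = 3 ∨ a = 4 ∧ b = 5) :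
    fermatπ (X a * X j) - ζ • fermatπ (X b * X j) ∈ fermatPlaneSpan ζ := by
  have hprod : fermatπ (X a * X j) - ζ • fermatπ (X b * X j)
      = fermatπ (X j) * fermatπ (X a - C ζ * X b) := by
    rw [← map_smul, ← map_sub, ← map_mul, smul_eq_C_mul]
    ring_nf
  rw [hprod]
  refine Submodule.subset_span ⟨_, fermatπ_mem_fermatDeg (isHomogeneous_X ℂ j), _, ?_, rfl⟩
  rcases hab with ⟨rfl, rfl⟩ | ⟨rfl, rfl⟩ | ⟨rfl, rfl⟩ <;> simp

theorem X_mul_X_mem_fermatPlaneSpan_sup {ζ ζ' : ℂ} (hne : ζ ≠ ζ') (i j : Fin 6) :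
    fermatπ (X i * X j) ∈ fermatPlaneSpan ζ ⊔ fermatPlaneSpan ζ' := by
  have hpair {a b : Fin 6} (hab : a = 0 ∧ b = 1 ∨ a = 2 ∧ b = 3 ∨ a = 4 ∧ b = 5) :=
    Submodule.mem_and_mem_of_sub_smul_mem hne
      (Submodule.mem_sup_left (X_mul_sub_smul_X_mul_mem_fermatPlaneSpan ζ j hab))
      (Submodule.mem_sup_right (X_mul_sub_smul_X_mul_mem_fermatPlaneSpan ζ' j hab))
  obtain ⟨a, b, hab, rfl | rfl⟩ : ∃ a b : Fin 6,
      (a = 0 ∧ b = 1 ∨ a = 2 ∧ b = 3 ∨ a = 4 ∧ b = 5) ∧ (i = a ∨ i = b) := by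
    revert i; decide
  exacts [(hpair hab).1, (hpair hab).2]

theorem fermat_deg_two_generated
    (ζ ζ' : ℂ) (hne : ζ ≠ ζ') :
    Submodule.span ℂ {x : FermatJacRing | ∃ ℓ ∈ fermatDeg 1,
        ∃ m ∈ ({fermatπ (X 0 - C ζ * X 1), fermatπ (X 2 - C ζ * X 3),
            fermatπ (X 4 - C ζ * X 5)} : Set FermatJacRing), x = ℓ * m}
      ⊔ Submodule.span ℂ {x : FermatJacRing | ∃ ℓ ∈ fermatDeg 1,
        ∃ m ∈ ({fermatπ (X 0 - C ζ' * X 1), fermatπ (X 2 - C ζ' * X 3),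
            fermatπ (X 4 - C ζ' * X 5)} : Set FermatJacRing), x = ℓ * m}
      = fermatDeg 2 := by
  change fermatPlaneSpan ζ ⊔ fermatPlaneSpan ζ' = fermatDeg 2
  exact le_antisymm
    (sup_le (fermatPlaneSpan_le_fermatDeg_two ζ) (fermatPlaneSpan_le_fermatDeg_two ζ'))
    (fermatDeg_two_le (X_mul_X_mem_fermatPlaneSpan_sup hne))
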